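/- arXiv:2508.15395 — 3 statements merged into one kernel-verified Lean document; each statement's English description precedes it below -/
import Mathlib

section
/- Let v > 0, x₀, t_q, L_m, L_s be real numbers with L_m ≥ 0, and let T(x_f) = t_q + (x_f − x₀)/v denote the time at which the corridor eVTOL h_k (moving at constant speed v from position x₀ at time t_q) reaches abscissa x_f. Let t̄ : ℝ → ℝ be the function assigning to each abscissa x_f the minimum time for the merging eVTOL to reach the point x_f − L_s with speed matched to v, and assume t̄ satisfies the constant-speed extension property: t̄(x_f') ≤ t̄(x_f) + (x_f' − x_f)/v whenever 0 ≤ x_f ≤ x_f' ≤ L_m. Then there exists a feasible abscissa x_f with 0 ≤ x_f ≤ L_m and T(x_f) ≥ t̄(x_f) if and only if T(L_m) ≥ t̄(L_m). (Abstract form of Proposition 1: the condition T_k^ter ≥ t̄_{ki}^a at the farthest allowable merging point is necessary and sufficient for the merging pair to be valid.) -/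
/-!
The arrival time `T` of the corridor eVTOL grows at exactly the rate `1 / v`, while the
constant-speed extension property says that `t̄` grows at most at that rate. Hence the slack
`T - t̄` is nondecreasing on `[0, L_m]`, and it is nonnegative somewhere iff it is at `L_m`.
-/

open Set

theorem slack_monotoneOn_of_extension {v x₀ tq Lm : ℝ} {T tbar : ℝ → ℝ}
    (hT : ∀ xf, T xf = tq + (xf - x₀) / v)
    (hext : ∀ xf xf', 0 ≤ xf → xf ≤ xf' → xf' ≤ Lm →
      tbar xf' ≤ tbar xf + (xf' - xf) / v) :
    MonotoneOn (fun x => T x - tbar x) (Icc 0 Lm) := by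
  intro x ⟨hx0, _⟩ y ⟨_, hyL⟩ hxy
  have hTy : T y = T x + (y - x) / v := by
    rw [hT, hT, add_assoc, ← add_div, sub_add_sub_cancel']
  have := hext x y hx0 hxy hyL
  simp only
  linarith

theorem stmt_1_general (v x₀ tq Lm : ℝ) (hLm : 0 ≤ Lm)
    (T tbar : ℝ → ℝ) (hT : ∀ xf, T xf = tq + (xf - x₀) / v)
    (hext : ∀ xf xf', 0 ≤ xf → xf ≤ xf' → xf' ≤ Lm →
      tbar xf' ≤ tbar xf + (xf' - xf) / v) :
    (∃ xf, 0 ≤ xf ∧ xf ≤ Lm ∧ tbar xf ≤ T xf) ↔ tbar Lm ≤ T Lm := by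
  constructor
  · rintro ⟨xf, hx0, hxL, hle⟩
    have := slack_monotoneOn_of_extension hT hext ⟨hx0, hxL⟩ ⟨hLm, le_rfl⟩ hxL
    simp only at this
    linarith
  · exact fun h => ⟨Lm, hLm, le_rfl, h⟩

/-- Abstract form of Proposition 1: the condition `T(L_m) ≥ t̄(L_m)` at the farthest
allowable merging point is necessary and sufficient for the existence of a feasible
merging abscissa `x_f ∈ [0, L_m]` with `T(x_f) ≥ t̄(x_f)`. -/
theorem stmt_1 (v x₀ tq Lm Ls : ℝ) (hv : 0 < v) (hLm : 0 ≤ Lm)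
    (T tbar : ℝ → ℝ) (hT : ∀ xf, T xf = tq + (xf - x₀) / v)
    (hext : ∀ xf xf', 0 ≤ xf → xf ≤ xf' → xf' ≤ Lm →
      tbar xf' ≤ tbar xf + (xf' - xf) / v) :
    (∃ xf, 0 ≤ xf ∧ xf ≤ Lm ∧ tbar xf ≤ T xf) ↔ tbar Lm ≤ T Lm :=
  stmt_1_general v x₀ tq Lm hLm T tbar hT hext
end

section
/- Let m > 0, F > 0, and g, φ, α, β, γ be real numbers. Define c₁ = cos α sin β cos γ + sin α sin γ, c₂ = cos α sin β sin γ − sin α cos γ, c₃ = cos β cos α (the entries of the third column of the Euler rotation matrix R₁(α,β,γ)), and suppose (F/m)·(cos φ · c₂ − sin φ · c₃) = −g·sin φ. Set r = √(1 − (m·g·sin φ / F)²). Then there exists a real angle θ (the tip-path-plane pitch angle) such that c₁ = r·sin θ and sin φ · c₂ + cos φ · c₃ = r·cos θ; consequently the horizontal and vertical acceleration components of the eVTOL in the rotated plane equal (F/m)·r·sin θ and (F/m)·r·cos θ − g·cos φ, respectively, i.e., the six-dimensional dynamics reduce to the planar dynamics v̇^{x′} = (F/m)·√(1 − (m g sin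 φ/F)²)·sin θ, v̇^{z′} = (F/m)·√(1 − (m g sin φ/F)²)·cos θ − g·cos φ. -/
/-!
The thrust direction `(c₁, c₂, c₃)` is a unit vector, and rotating by `φ` about the x-axis keeps
it one. The planar constraint pins its out-of-plane component to `-m g sin φ / F`, so the
in-plane component `(c₁, sin φ c₂ + cos φ c₃)` has length `r`; its polar angle is `θ`.
-/

open Real

lemma euler_third_column_sq_sum (α β γ : ℝ) :
    (cos α * sin β * cos γ + sin α * sin γ) ^ 2 + (cos α * sin β * sin γ - sin α * cos γ) ^ 2
      + (cos β * cos α) ^ 2 = 1 := by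
  linear_combination (cos α ^ 2 * sin β ^ 2 + sin α ^ 2) * sin_sq_add_cos_sq γ
    + cos α ^ 2 * sin_sq_add_cos_sq β + sin_sq_add_cos_sq α

lemma rotation_sq_add_sq (φ b c : ℝ) :
    (sin φ * b + cos φ * c) ^ 2 + (cos φ * b - sin φ * c) ^ 2 = b ^ 2 + c ^ 2 := by
  linear_combination (b ^ 2 + c ^ 2) * sin_sq_add_cos_sq φ

lemma exists_eq_sqrt_mul_sin_and_eq_sqrt_mul_cos (a b : ℝ) :
    ∃ θ : ℝ, a = √(a ^ 2 + b ^ 2) * sin θ ∧ b = √(a ^ 2 + b ^ 2) * cos θ := by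
  let z : ℂ := ⟨b, a⟩
  have hz : ‖z‖ = √(a ^ 2 + b ^ 2) := by rw [Complex.norm_eq_sqrt_sq_add_sq, add_comm]
  exact ⟨z.arg, by rw [← hz, Complex.norm_mul_sin_arg], by rw [← hz, Complex.norm_mul_cos_arg]⟩

/-- Under the planar-motion constraint there exists a tip-path-plane pitch angle `θ`
such that the in-plane thrust direction components are `r·sin θ` and `r·cos θ` with
`r = √(1 − (m·g·sin φ/F)²)`; consequently the six-dimensional dynamics reduce to the
planar dynamics
`v̇^{x′} = (F/m)·√(1 − (m g sin φ/F)²)·sin θ`,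
`v̇^{z′} = (F/m)·√(1 − (m g sin φ/F)²)·cos θ − g·cos φ`. -/
theorem stmt_7 (m F g φ α β γ : ℝ) (hm : 0 < m) (hF : 0 < F)
    (c₁ c₂ c₃ : ℝ)
    (hc₁ : c₁ = cos α * sin β * cos γ + sin α * sin γ)
    (hc₂ : c₂ = cos α * sin β * sin γ - sin α * cos γ)
    (hc₃ : c₃ = cos β * cos α)
    (hplanar : (F / m) * (cos φ * c₂ - sin φ * c₃) = -g * sin φ)
    (r : ℝ) (hr : r = Real.sqrt (1 - (m * g * sin φ / F) ^ 2)) :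
    ∃ θ : ℝ,
      c₁ = r * sin θ ∧
      sin φ * c₂ + cos φ * c₃ = r * cos θ ∧
      (F / m) * c₁ = (F / m) * Real.sqrt (1 - (m * g * sin φ / F) ^ 2) * sin θ ∧
      (F / m) * (sin φ * c₂ + cos φ * c₃) - g * cos φ =
        (F / m) * Real.sqrt (1 - (m * g * sin φ / F) ^ 2) * cos θ - g * cos φ := by
  have hcross : cos φ * c₂ - sin φ * c₃ = -(m * g * sin φ / F) := by
    field_simp at hplanar ⊢
    linarith
  have hunit := euler_third_column_sq_sum α β γ
  rw [← hc₁, ← hc₂, ← hc₃] at hunit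
  have hsum : c₁ ^ 2 + (sin φ * c₂ + cos φ * c₃) ^ 2 = 1 - (m * g * sin φ / F) ^ 2 := by
    linear_combination hunit + rotation_sq_add_sq φ c₂ c₃
      - (cos φ * c₂ - sin φ * c₃ - m * g * sin φ / F) * hcross
  obtain ⟨θ, hsin, hcos⟩ :=
    exists_eq_sqrt_mul_sin_and_eq_sqrt_mul_cos c₁ (sin φ * c₂ + cos φ * c₃)
  rw [hsum, ← hr] at hsin hcos
  refine ⟨θ, hsin, hcos, ?_, ?_⟩ <;> rw [← hr]
  · rw [hsin, mul_assoc]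
  · rw [hcos, mul_assoc]
end

section
/- Let L_o, L_m, L_s, x₀, v_lead, v be real numbers with v_lead > 0, v > 0, x₀ < L_m, and suppose the initial separation satisfies x₀ + L_o ≥ L_s and the speed-adjustment rule v ≤ v_lead·(L_m + L_o − L_s)/(L_m − x₀) holds. Let the leader's position be X_lead(t) = x₀ + v_lead·(t − t_e) and the follower's position be X(t) = −L_o + v·(t − t_e). Then for every time t with t_e ≤ t ≤ t_e + (L_m − x₀)/v_lead (i.e., until the leader reaches the endpoint L_m of the TM section), the separation satisfies X_lead(t) − X(t) ≥ L_s. -/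
/-!
The separation `X_lead t - X t = (x₀ + L_o) + (v_lead - v) (t - t_e)` is affine in `t`, so on the
time window it is bounded below by its values at the two ends. At `t_e` it is the initial
separation `x₀ + L_o`; when the leader reaches `L_m` it equals `L_m + L_o - v (L_m - x₀) / v_lead`,
and the speed-adjustment rule is exactly the statement that this is at least `L_s`.
-/

lemma le_add_mul_of_le_of_le_add_mul {a b c s T : ℝ} (h₀ : c ≤ a) (hT : c ≤ a + b * T)
    (hs₀ : 0 ≤ s) (hsT : s ≤ T) : c ≤ a + b * s := by
  rcases le_total 0 b with hb | hb
  · nlinarith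
  · nlinarith

lemma le_separation_at_arrival {Lo Lm Ls x₀ vlead v : ℝ} (hvlead : 0 < vlead) (hx₀ : x₀ < Lm)
    (hrule : v ≤ vlead * (Lm + Lo - Ls) / (Lm - x₀)) :
    Ls ≤ (x₀ + Lo) + (vlead - v) * ((Lm - x₀) / vlead) := by
  have hgap : 0 < Lm - x₀ := sub_pos.mpr hx₀
  rw [le_div_iff₀ hgap] at hrule
  have harrival : (vlead - v) * ((Lm - x₀) / vlead) = (Lm - x₀) - v * (Lm - x₀) / vlead := by
    field_simp
  have hdelay : v * (Lm - x₀) / vlead ≤ Lm + Lo - Ls := by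
    rw [div_le_iff₀ hvlead]; linarith
  linarith

theorem stmt_10_general (Lo Lm Ls x₀ vlead v te : ℝ)
    (hvlead : 0 < vlead) (hx₀ : x₀ < Lm)
    (hsep : Ls ≤ x₀ + Lo)
    (hrule : v ≤ vlead * (Lm + Lo - Ls) / (Lm - x₀))
    (Xlead X : ℝ → ℝ)
    (hXlead : ∀ t, Xlead t = x₀ + vlead * (t - te))
    (hX : ∀ t, X t = -Lo + v * (t - te)) :
    ∀ t, te ≤ t → t ≤ te + (Lm - x₀) / vlead → Ls ≤ Xlead t - X t := by
  intro t hstart hend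
  have hseparation : Xlead t - X t = (x₀ + Lo) + (vlead - v) * (t - te) := by
    rw [hXlead, hX]; ring
  rw [hseparation]
  exact le_add_mul_of_le_of_le_add_mul hsep (le_separation_at_arrival hvlead hx₀ hrule)
    (sub_nonneg.mpr hstart) (by linarith)

/-- The one-time speed-adjustment rule at the entrance of the observation zone
guarantees safe separation `X_lead(t) − X(t) ≥ L_s` from the preceding corridor eVTOL
throughout the observation zone and the TM section, i.e. until the leader reaches
the endpoint `L_m` of the TM section. -/
theorem stmt_10 (Lo Lm Ls x₀ vlead v te : ℝ)
    (hvlead : 0 < vlead) (hv : 0 < v) (hx₀ : x₀ < Lm)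
    (hsep : Ls ≤ x₀ + Lo)
    (hrule : v ≤ vlead * (Lm + Lo - Ls) / (Lm - x₀))
    (Xlead X : ℝ → ℝ)
    (hXlead : ∀ t, Xlead t = x₀ + vlead * (t - te))
    (hX : ∀ t, X t = -Lo + v * (t - te)) :
    ∀ t, te ≤ t → t ≤ te + (Lm - x₀) / vlead → Ls ≤ Xlead t - X t :=
  stmt_10_general Lo Lm Ls x₀ vlead v te hvlead hx₀ hsep hrule Xlead X hXlead hX
end
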